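/- Let β, β' ∈ Π_aff^{re,+} with β + β' = c, and let m be a positive integer. Then the product (s_β s_{β'})^m is reduced, i.e. its length equals the sum of the lengths of its 2m reflection factors; in particular ℓ((s_β s_{β'})^m) = 2m(n−1). -/

import Mathlib

open scoped BigOperators

namespace AffA

/-- Elements `⟨w, λ⟩` representing `w · t_λ` in the affine Weyl group
`W_aff = W ⋉ Q∨` of type `A_{n-1}^{(1)}`; the translation part `λ` is recorded
in `ε`-coordinates. -/
@[ext]
structure Aff (n : ℕ) where
  w : Equiv.Perm (Fin n)
  t : Fin n → ℤ

namespace Aff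

variable {n : ℕ}

instance : Nonempty (Aff n) := ⟨⟨1, 0⟩⟩

/-- multiplication: `(w t_λ)(v t_μ) = (wv) t_{v⁻¹λ + μ}`. -/
def mul' (x y : Aff n) : Aff n := ⟨x.w * y.w, fun i => x.t (y.w i) + y.t i⟩

def inv' (x : Aff n) : Aff n := ⟨x.w⁻¹, fun i => - x.t (x.w⁻¹ i)⟩

instance : Group (Aff n) where
  mul := mul'
  one := ⟨1, 0⟩
  inv := inv'
  mul_assoc a b c := by
    show mul' (mul' a b) c = mul' a (mul' b c)
    simp only [mul', Aff.mk.injEq]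
    refine ⟨mul_assoc _ _ _, funext fun i => ?_⟩
    simp [Equiv.Perm.mul_apply, add_assoc]
  one_mul a := by
    obtain ⟨aw, av⟩ := a
    show mul' ⟨1, 0⟩ ⟨aw, av⟩ = ⟨aw, av⟩
    simp only [mul', Aff.mk.injEq]
    exact ⟨one_mul _, funext fun i => by simp⟩
  mul_one a := by
    obtain ⟨aw, av⟩ := a
    show mul' ⟨aw, av⟩ ⟨1, 0⟩ = ⟨aw, av⟩
    simp only [mul', Aff.mk.injEq]
    exact ⟨mul_one _, funext fun i => by simp⟩
  inv_mul_cancel a := by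
    obtain ⟨aw, av⟩ := a
    show mul' (inv' ⟨aw, av⟩) ⟨aw, av⟩ = ⟨1, 0⟩
    simp only [mul', inv', Aff.mk.injEq]
    exact ⟨inv_mul_cancel _, funext fun i => by simp⟩

/-- cyclic successor on the vertices `α_0, …, α_{n-1}` of the affine Dynkin diagram. -/
def fsucc (i : Fin n) : Fin n :=
  ⟨(i.val + 1) % n, Nat.mod_lt _ (Nat.lt_of_le_of_lt (Nat.zero_le _) i.isLt)⟩

/-- the coefficient of `α_0`. -/
def coeff0 (a : Fin n → ℤ) : ℤ := if h : 0 < n then a ⟨0, h⟩ else 0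

/-- the `ε`-coordinates of the finite part of an element of the affine root
lattice written in the coordinates of the simple roots `α_0, …, α_{n-1}`
(`δ` is sent to `0`). -/
def finPart (a : Fin n → ℤ) : Fin n → ℤ := fun i => a (fsucc i) - a i

/-- `c = δ = α_0 + α_1 + ⋯ + α_{n-1}`, in simple root coordinates. -/
def cvec (n : ℕ) : Fin n → ℤ := fun _ => 1

/-- the affine Cartan matrix of type `A_{n-1}^{(1)}` (for `n ≥ 3`). -/
def cartan (i j : Fin n) : ℤ :=
  if i = j then 2 else if j = fsucc i ∨ i = fsucc j then -1 else 0

/-- the natural pairing `⟨a, b∨⟩` of elements of the affine root lattice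
(simple root coordinates). -/
def pairing (a b : Fin n → ℤ) : ℤ := ∑ i : Fin n, ∑ j : Fin n, a i * cartan i j * b j

/-- real roots of the affine root system: lattice vectors of norm `2`. -/
def IsRealRoot (a : Fin n → ℤ) : Prop := pairing a a = 2

/-- affine positive real roots: real roots with nonnegative coordinates. -/
def IsPosRoot (a : Fin n → ℤ) : Prop := IsRealRoot a ∧ ∀ i, 0 ≤ a i

/-- perpendicularity of affine roots. -/
def Perp (a b : Fin n → ℤ) : Prop := pairing a b = 0

/-- the support of an affine root. -/
def supp (a : Fin n → ℤ) : Finset (Fin n) := Finset.univ.filter fun i => a i ≠ 0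

/-- the supports of `a` and `b` are disconnected in the affine Dynkin diagram
(a cycle on `α_0, …, α_{n-1}`): no vertex of one is equal or adjacent to a
vertex of the other. -/
def Disconn (a b : Fin n → ℤ) : Prop :=
  ∀ i j : Fin n, a i ≠ 0 → b j ≠ 0 → i ≠ j ∧ j ≠ fsucc i ∧ i ≠ fsucc j

/-- for roots `a, b < c` (0–1 vectors), `a ∩ b = Σ_{α_i ∈ supp a ∩ supp b} α_i`. -/
def inter (a b : Fin n → ℤ) : Fin n → ℤ :=
  fun i => if a i ≠ 0 ∧ b i ≠ 0 then 1 else 0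

instance : Nonempty (Equiv.Perm (Fin n)) := ⟨1⟩

/-- the reflection `s_β = s_α t_{mα}` associated to the real root `β = α + mδ`
(given in simple root coordinates). -/
noncomputable def sref (a : Fin n → ℤ) : Aff n :=
  ⟨Classical.epsilon fun w : Equiv.Perm (Fin n) => ∃ p q : Fin n,
      finPart a = Pi.single p 1 - Pi.single q 1 ∧ w = Equiv.swap p q,
    fun i => coeff0 a * finPart a i⟩

/-- the simple reflections `s_0, …, s_{n-1}`. -/
noncomputable def simple (i : Fin n) : Aff n := sref (Pi.single i 1)

/-- the Coxeter length, via the Iwahori–Matsumoto formula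
`ℓ(w t_λ) = Σ_{γ ∈ Π⁺} |χ(w·γ < 0) + ⟨λ, γ⟩|`. -/
def len (x : Aff n) : ℕ :=
  ∑ p : Fin n, ∑ q : Fin n,
    if p < q then ((if x.w q < x.w p then (1 : ℤ) else 0) + (x.t p - x.t q)).natAbs else 0

/-- translation `t_v` by an element `v` of the (co)root lattice given in
`ε`-coordinates. -/
def trE (v : Fin n → ℤ) : Aff n := ⟨1, v⟩

/-- a Bruhat step: an edge of the moment graph which increases the length. -/
def bstep (u v : Aff n) : Prop :=
  (∃ a, IsPosRoot a ∧ v = u * sref a) ∧ len u < len v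

/-- the Bruhat order: `u ≤ v` iff there is an increasing chain from `u` to `v`
in the moment graph. -/
def ble (u v : Aff n) : Prop := Relation.ReflTransGen bstep u v

/-- there is a chain in the moment graph from `u` to `v` of total degree `≤ d`. -/
def ChainTo (d : Fin n → ℤ) (u v : Aff n) : Prop :=
  ∃ l : List (Fin n → ℤ),
    (∀ b ∈ l, IsPosRoot b) ∧ l.sum ≤ d ∧ v = u * (l.map sref).prod

/-- the set of elements reachable from some `u' ≤ u` by a chain of degree `≤ d`. -/
def nbhdSet (d : Fin n → ℤ) (u : Aff n) : Set (Aff n) :=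
  {v | ∃ u', ble u' u ∧ ChainTo d u' v}

/-- the combinatorial curve neighborhood `Γ_d(u)`: the Bruhat-maximal elements
among those reachable from some `u' ≤ u` by a chain of degree `≤ d`. -/
def curveNbhd (d : Fin n → ℤ) (u : Aff n) : Set (Aff n) :=
  {v | v ∈ nbhdSet d u ∧ ∀ x ∈ nbhdSet d u, ble v x → x = v}

/-- one step of the Hecke product. -/
noncomputable def heckeStep (u : Aff n) (i : Fin n) : Aff n :=
  if len u < len (u * simple i) then u * simple i else u

/-- the Hecke product `u · v`: multiply `u` on the right, left to right, by the
letters of a reduced word for `v`. -/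
noncomputable def heckeMul (u v : Aff n) : Aff n :=
  (Classical.epsilon fun l : List (Fin n) =>
      (l.map simple).prod = v ∧ l.length = len v).foldl heckeStep u

/-- the Hecke product `s_{β_1} · s_{β_2} · ⋯ · s_{β_r}` of the reflections of a
list of roots. -/
noncomputable def heckeList (l : List (Fin n → ℤ)) : Aff n :=
  l.foldl (fun u b => heckeMul u (sref b)) 1

/-- the defining recursion for `z_d`: `z_0 = id` and `z_d = s_α · z_{d-α}`
(Hecke product), where `α` is any maximal root with `α ≤ d`. -/
inductive IsZ : (Fin n → ℤ) → Aff n → Prop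
  | zero : IsZ 0 1
  | step {d a : Fin n → ℤ} {x : Aff n} :
      IsPosRoot a → a ≤ d →
      (∀ b, IsPosRoot b → b ≤ d → a ≤ b → b = a) →
      IsZ (d - a) x → IsZ d (heckeMul (sref a) x)

end Aff
end AffA

/-!
A real root `β < c` has finite part `e_p - e_q` (its norm is `2` and the pairing is the standard
inner product of finite parts), so `s_β = (p q) t_{k(e_p - e_q)}` with `k` the `α_0`-coefficient
of `β`, and `β' = c - β` gives `s_{β'} = (p q) t_{(1-k)(e_q - e_p)}`. Hence `s_β s_{β'}` is the
translation `t_{e_q - e_p}`, and by the Iwahori–Matsumoto formula its `m`-th power has length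
`2m(n-1)`. As `β` is the indicator of the cyclic interval `(p, q]`, we have `k = 0` when `p < q`
(and symmetrically otherwise): the two factors are then `(p q)` and `(p q) t_{e_q - e_p}`. Every
inversion of `(p q)` pairs negatively with `e_q - e_p`, so pair by pair their lengths add up to
that of `t_{e_q - e_p}`.
-/

namespace AffA.Aff

variable {n : ℕ}

lemma mk_mul (w w' : Equiv.Perm (Fin n)) (t t' : Fin n → ℤ) :
    (⟨w, t⟩ * ⟨w', t'⟩ : Aff n) = ⟨w * w', fun i => t (w' i) + t' i⟩ := rfl

section Cycle

lemma fsucc_val (i : Fin n) : (fsucc i).val = if i.val + 1 = n then 0 else i.val + 1 := by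
  have := i.isLt
  rcases (show i.val + 1 < n ∨ i.val + 1 = n by omega) with h | h
  · simp [fsucc, Nat.mod_eq_of_lt h, h.ne]
  · simp [fsucc, h]

lemma fsucc_bijective : Function.Bijective (fsucc (n := n)) := by
  refine Finite.injective_iff_bijective.mp fun i j h => Fin.ext ?_
  have := congrArg Fin.val h
  rw [fsucc_val, fsucc_val] at this
  split_ifs at this <;> omega

lemma fsucc_ne_self (hn : 2 ≤ n) (i : Fin n) : fsucc i ≠ i := by
  intro h
  have := congrArg Fin.val h
  rw [fsucc_val] at this
  split_ifs at this <;> omega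

lemma fsucc_fsucc_ne_self (hn : 3 ≤ n) (i : Fin n) : fsucc (fsucc i) ≠ i := by
  intro h
  have := congrArg Fin.val h
  rw [fsucc_val, fsucc_val] at this
  have := i.isLt
  split_ifs at * <;> omega

lemma sum_comp_fsucc {M : Type*} [AddCommMonoid M] (f : Fin n → M) :
    ∑ i, f (fsucc i) = ∑ i, f i :=
  Fintype.sum_bijective fsucc fsucc_bijective _ _ fun _ => rfl

end Cycle

section Roots

lemma cartan_eq (hn : 3 ≤ n) (i j : Fin n) :
    cartan i j = 2 * (if i = j then 1 else 0) - (if j = fsucc i then 1 else 0)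
      - (if i = fsucc j then 1 else 0) := by
  have h1 := fsucc_ne_self (by omega) i
  have h2 := fsucc_fsucc_ne_self hn i
  unfold cartan
  by_cases hij : i = j
  · subst hij
    simp [h1.symm]
  · have : ¬ (j = fsucc i ∧ i = fsucc j) := fun ⟨hj, hi⟩ => h2 (hj ▸ hi).symm
    split_ifs <;> omega

lemma pairing_eq_sum_finPart_mul (hn : 3 ≤ n) (a b : Fin n → ℤ) :
    pairing a b = ∑ i, finPart a i * finPart b i := by
  have hrow : ∀ i, ∑ j, a i * cartan i j * b j =
      2 * (a i * b i) - a i * b (fsucc i) - ∑ j, if i = fsucc j then a i * b j else 0 := by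
    intro i
    have hentry : ∀ j, a i * cartan i j * b j = 2 * (if i = j then a i * b j else 0)
        - (if j = fsucc i then a i * b j else 0) - (if i = fsucc j then a i * b j else 0) :=
      fun j => by rw [cartan_eq hn]; split_ifs <;> ring
    simp only [hentry, Finset.sum_sub_distrib, ← Finset.mul_sum, Finset.sum_ite_eq,
      Finset.sum_ite_eq', Finset.mem_univ, if_true]
  have hcol : ∑ i, ∑ j, (if i = fsucc j then a i * b j else 0) = ∑ j, a (fsucc j) * b j := by
    rw [Finset.sum_comm]
    simp
  have hshift : ∑ i, a (fsucc i) * b (fsucc i) = ∑ i, a i * b i :=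
    sum_comp_fsucc fun i => a i * b i
  simp only [pairing, hrow, Finset.sum_sub_distrib, hcol, finPart, sub_mul, mul_sub, hshift,
    ← Finset.mul_sum]
  ring

lemma sum_finPart (a : Fin n → ℤ) : ∑ i, finPart a i = 0 := by
  simp only [finPart, Finset.sum_sub_distrib, sum_comp_fsucc, sub_self]

lemma finPart_add (a b : Fin n → ℤ) : finPart (a + b) = finPart a + finPart b := by
  ext i
  simp only [finPart, Pi.add_apply]
  ring

lemma finPart_cvec : finPart (cvec n) = 0 := by
  ext i
  simp [finPart, cvec]

lemma exists_eq_single_sub_single {ι : Type*} [Fintype ι] [DecidableEq ι] (f : ι → ℤ)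
    (hsum : ∑ i, f i = 0) (hsq : ∑ i, f i ^ 2 = 2) :
    ∃ p q, p ≠ q ∧ f = Pi.single p 1 - Pi.single q 1 := by
  have hunit : ∀ i, f i ≠ 0 → f i = 1 ∨ f i = -1 := by
    intro i hi
    have : f i ^ 2 ≤ 2 :=
      hsq ▸ Finset.single_le_sum (fun j _ => sq_nonneg (f j)) (Finset.mem_univ i)
    have : -1 ≤ f i := by nlinarith
    have : f i ≤ 1 := by nlinarith
    omega
  have hcard : (Finset.univ.filter fun i => f i ≠ 0).card = 2 := by
    have : ∀ i, f i ^ 2 = if f i ≠ 0 then 1 else 0 := fun i => by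
      split_ifs with hi
      · rcases hunit i hi with h | h <;> simp [h]
      · simp_all
    simp only [this, Finset.sum_boole] at hsq
    exact_mod_cast hsq
  obtain ⟨x, y, hxy, hs⟩ := Finset.card_eq_two.mp hcard
  have hmem : ∀ i, f i ≠ 0 ↔ i = x ∨ i = y := fun i => by
    simpa using congrArg (i ∈ ·) hs
  have hxy0 : f x + f y = 0 := by
    rw [← Finset.sum_filter_ne_zero, hs, Finset.sum_pair hxy] at hsum
    exact hsum
  have hrest : ∀ i, i ≠ x → i ≠ y → f i = 0 := fun i hx hy => by
    by_contra h
    rcases (hmem i).mp h with h | h <;> contradiction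
  rcases hunit x ((hmem x).mpr (Or.inl rfl)) with hx | hx
  · refine ⟨x, y, hxy, funext fun i => ?_⟩
    by_cases hix : i = x <;> by_cases hiy : i = y <;> (simp_all; try omega)
  · refine ⟨y, x, hxy.symm, funext fun i => ?_⟩
    by_cases hix : i = x <;> by_cases hiy : i = y <;> (simp_all; try omega)

lemma single_sub_single_injective {ι : Type*} [DecidableEq ι] {p q p' q' : ι} (hpq : p ≠ q)
    (h : (Pi.single p 1 - Pi.single q 1 : ι → ℤ) = Pi.single p' 1 - Pi.single q' 1) :
    p' = p ∧ q' = q := by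
  have hp := congrFun h p
  have hq := congrFun h q
  simp only [Pi.sub_apply, Pi.single_apply, if_neg hpq, if_neg hpq.symm] at hp hq
  split_ifs at hp hq <;> first | omega | exact ⟨by simp_all, by simp_all⟩

lemma sref_eq_of_finPart_eq {a : Fin n → ℤ} {p q : Fin n} (hpq : p ≠ q)
    (hf : finPart a = Pi.single p 1 - Pi.single q 1) :
    sref a = ⟨Equiv.swap p q, coeff0 a • (Pi.single p 1 - Pi.single q 1)⟩ := by
  obtain ⟨p', q', hf', hw⟩ := Classical.epsilon_spec
    (p := fun w : Equiv.Perm (Fin n) => ∃ p q : Fin n,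
      finPart a = Pi.single p 1 - Pi.single q 1 ∧ w = Equiv.swap p q)
    ⟨_, p, q, hf, rfl⟩
  obtain ⟨rfl, rfl⟩ := single_sub_single_injective hpq (hf.symm.trans hf')
  simp only [sref, hw, ← hf]
  rfl

lemma apply_eq_apply_zero_of_finPart_eq_zero (a : Fin n → ℤ) (k : Fin n)
    (h : ∀ i < k, finPart a i = 0) : a k = a ⟨0, k.pos⟩ := by
  obtain ⟨k, hk⟩ := k
  induction k with
  | zero => rfl
  | succ k ih =>
    have hsucc : fsucc ⟨k, by omega⟩ = ⟨k + 1, hk⟩ := Fin.ext (by simp [fsucc_val, hk.ne])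
    have hk0 := h ⟨k, by omega⟩ (Fin.mk_lt_mk.mpr k.lt_succ_self)
    rw [finPart, hsucc, sub_eq_zero] at hk0
    rw [hk0, ih (by omega) fun i hi => h i (hi.trans (Fin.mk_lt_mk.mpr k.lt_succ_self))]

lemma coeff0_eq_zero_of_lt {a : Fin n → ℤ} (ha0 : ∀ i, 0 ≤ a i) (ha1 : ∀ i, a i ≤ 1)
    {p q : Fin n} (hpq : p < q) (hf : finPart a = Pi.single p 1 - Pi.single q 1) :
    coeff0 a = 0 := by
  have hconst : a p = a ⟨0, p.pos⟩ := apply_eq_apply_zero_of_finPart_eq_zero a p fun i hi => by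
    simp [hf, hi.ne, (hi.trans hpq).ne]
  have hstep : a (fsucc p) - a p = 1 := by
    simpa [finPart, Pi.single_apply, hpq.ne] using congrFun hf p
  rw [coeff0, dif_pos p.pos]
  linarith [ha0 p, ha1 (fsucc p)]

end Roots

section Length

lemma len_trE (v : Fin n → ℤ) :
    len (trE v) = ∑ p, ∑ q, if p < q then (v p - v q).natAbs else 0 := by
  refine Finset.sum_congr rfl fun p _ => Finset.sum_congr rfl fun q _ => ?_
  by_cases h : p < q
  · simp [trE, h, h.not_gt]
  · simp [h]

lemma trE_add (v w : Fin n → ℤ) : trE (v + w) = trE v * trE w := rfl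

lemma trE_pow (v : Fin n → ℤ) (m : ℕ) : trE v ^ m = trE (m • v) := by
  induction m with
  | zero => rw [pow_zero, zero_nsmul]; rfl
  | succ m ih => rw [pow_succ, ih, ← trE_add, succ_nsmul]

lemma len_trE_nsmul (v : Fin n → ℤ) (m : ℕ) : len (trE (m • v)) = m * len (trE v) := by
  simp only [len_trE, Finset.mul_sum, nsmul_eq_mul, Pi.mul_apply, Pi.natCast_apply, ← mul_sub,
    Int.natAbs_mul, Int.natAbs_natCast, mul_ite, mul_zero]

lemma sum_ite_lt_add {ι : Type*} [Fintype ι] [LinearOrder ι] (f : ι → ℕ) :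
    ∑ i, ∑ j, (if i < j then f i + f j else 0) = (Fintype.card ι - 1) * ∑ i, f i := by
  have hswap :
      ∑ i, ∑ j, (if i < j then f j else 0) = ∑ i, ∑ j, (if j < i then f i else 0) :=
    Finset.sum_comm
  have hrow : ∀ i, ∑ j, ((if i < j then f i else 0) + if j < i then f i else 0) =
      (Fintype.card ι - 1) * f i := fun i => by
    have hne : ∀ j, ((if i < j then f i else 0) + if j < i then f i else 0) =
        if j ≠ i then f i else 0 := fun j => by
      rcases lt_trichotomy i j with h | rfl | h
      · simp [h, h.ne', h.not_gt]
      · simp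
      · simp [h, h.ne, h.not_gt]
    simp [hne, Finset.sum_ite, Finset.filter_ne', Finset.card_erase_of_mem]
  calc ∑ i, ∑ j, (if i < j then f i + f j else 0)
      = ∑ i, ∑ j, (if i < j then f i else 0) + ∑ i, ∑ j, (if i < j then f j else 0) := by
        rw [← Finset.sum_add_distrib]
        refine Finset.sum_congr rfl fun i _ => ?_
        rw [← Finset.sum_add_distrib]
        exact Finset.sum_congr rfl fun j _ => by split_ifs <;> rfl
    _ = (Fintype.card ι - 1) * ∑ i, f i := by
        rw [hswap, ← Finset.sum_add_distrib, Finset.mul_sum]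
        exact Finset.sum_congr rfl fun i _ => by rw [← hrow, Finset.sum_add_distrib]

lemma len_trE_single_sub_single {a b : Fin n} (hab : a ≠ b) :
    len (trE (Pi.single b 1 - Pi.single a 1)) = 2 * (n - 1) := by
  set v : Fin n → ℤ := Pi.single b 1 - Pi.single a 1
  have hv : ∀ i, (v i).natAbs = (if i = b then 1 else 0) + if i = a then 1 else 0 := fun i => by
    by_cases hib : i = b <;> by_cases hia : i = a <;> simp_all [v]
  have hpair : ∀ i j, i ≠ j → (v i - v j).natAbs = (v i).natAbs + (v j).natAbs := by
    intro i j hij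
    simp only [v, Pi.sub_apply, Pi.single_apply]
    split_ifs <;> simp_all
  rw [len_trE, Finset.sum_congr rfl fun i _ => Finset.sum_congr rfl fun j _ =>
    ite_congr rfl (fun h => hpair i j h.ne) fun _ => rfl, sum_ite_lt_add]
  simp [hv, Finset.sum_add_distrib, mul_comm]

lemma eq_or_eq_of_swap_lt_swap {ι : Type*} [LinearOrder ι] {a b i j : ι} (hab : a < b)
    (hij : i < j) (h : Equiv.swap a b j < Equiv.swap a b i) : i = a ∨ j = b := by
  by_contra! hne
  simp only [Equiv.swap_apply_def] at h
  split_ifs at h <;> order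

lemma len_add_len_eq_len_trE (w : Equiv.Perm (Fin n)) (t : Fin n → ℤ)
    (ht : ∀ i j, i < j → w j < w i → t i - t j ≤ -1) :
    len ⟨w, 0⟩ + len ⟨w, t⟩ = len (trE t) := by
  rw [len_trE, len, len, ← Finset.sum_add_distrib]
  refine Finset.sum_congr rfl fun i _ => ?_
  rw [← Finset.sum_add_distrib]
  refine Finset.sum_congr rfl fun j _ => ?_
  by_cases hij : i < j
  -- on an inversion, `1 + |1 + x| = |x|` because `x ≤ -1`
  · have := ht i j hij
    simp only [if_pos hij, Pi.zero_apply, sub_zero, add_zero]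
    split_ifs <;> omega
  · simp [hij]

lemma len_swap_add_len_swap {a b : Fin n} (hab : a < b) :
    len ⟨Equiv.swap a b, 0⟩ + len ⟨Equiv.swap a b, Pi.single b 1 - Pi.single a 1⟩ =
      2 * (n - 1) := by
  rw [len_add_len_eq_len_trE, len_trE_single_sub_single hab.ne]
  intro i j hij h
  rcases eq_or_eq_of_swap_lt_swap hab hij h with rfl | rfl
  all_goals
    simp only [Pi.sub_apply, Pi.single_apply]
    split_ifs <;> omega

end Length

section Complementary

variable {β β' : Fin n → ℤ}

lemma IsRealRoot.exists_finPart_eq (hn : 3 ≤ n) (hβ : IsRealRoot β) :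
    ∃ p q, p ≠ q ∧ finPart β = Pi.single p 1 - Pi.single q 1 :=
  exists_eq_single_sub_single _ (sum_finPart β) <| by
    rw [← hβ, pairing_eq_sum_finPart_mul hn]
    simp only [sq]

lemma IsPosRoot.le_one_of_add_eq_cvec (hβ' : IsPosRoot β') (hc : β + β' = cvec n) (i : Fin n) :
    β i ≤ 1 := by
  have := congrFun hc i
  simp only [Pi.add_apply, cvec] at this
  linarith [hβ'.2 i]

lemma finPart_eq_of_add_eq_cvec (hc : β + β' = cvec n) {p q : Fin n}
    (hf : finPart β = Pi.single p 1 - Pi.single q 1) :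
    finPart β' = Pi.single q 1 - Pi.single p 1 := by
  have := finPart_add β β'
  rw [hc, finPart_cvec, hf, eq_comm, add_eq_zero_iff_neg_eq] at this
  rw [← this, neg_sub]

lemma coeff0_add_coeff0 (hn : 0 < n) (hc : β + β' = cvec n) : coeff0 β + coeff0 β' = 1 := by
  simpa [coeff0, hn, cvec] using congrFun hc ⟨0, hn⟩

lemma sref_mul_sref_of_finPart_eq (hc : β + β' = cvec n) {p q : Fin n} (hpq : p ≠ q)
    (hf : finPart β = Pi.single p 1 - Pi.single q 1) :
    sref β * sref β' = trE (Pi.single q 1 - Pi.single p 1) := by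
  have hcoeff := coeff0_add_coeff0 p.pos hc
  rw [sref_eq_of_finPart_eq hpq hf,
    sref_eq_of_finPart_eq hpq.symm (finPart_eq_of_add_eq_cvec hc hf)]
  rw [mk_mul, trE, Equiv.swap_comm q p, Equiv.swap_mul_self]
  congr 1
  funext i
  have hswap : (Pi.single p 1 - Pi.single q 1 : Fin n → ℤ) (Equiv.swap p q i) =
      (Pi.single q 1 - Pi.single p 1 : Fin n → ℤ) i := by
    simp only [Pi.sub_apply, Pi.single_apply, Equiv.swap_apply_def]
    split_ifs <;> simp_all
  simp only [Pi.smul_apply, smul_eq_mul, hswap]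
  linear_combination (Pi.single q 1 - Pi.single p 1 : Fin n → ℤ) i * hcoeff

lemma len_sref_add_len_sref_of_lt (hβ : ∀ i, 0 ≤ β i) (hβ' : IsPosRoot β')
    (hc : β + β' = cvec n) {p q : Fin n} (hpq : p < q)
    (hf : finPart β = Pi.single p 1 - Pi.single q 1) :
    len (sref β) + len (sref β') = 2 * (n - 1) := by
  have h0 : coeff0 β = 0 := coeff0_eq_zero_of_lt hβ (hβ'.le_one_of_add_eq_cvec hc) hpq hf
  have h1 : coeff0 β' = 1 := by linarith [coeff0_add_coeff0 p.pos hc]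
  rw [sref_eq_of_finPart_eq hpq.ne hf,
    sref_eq_of_finPart_eq hpq.ne' (finPart_eq_of_add_eq_cvec hc hf), h0, h1, zero_smul, one_smul,
    Equiv.swap_comm q p]
  exact len_swap_add_len_swap hpq

lemma len_sref_add_len_sref (hn : 3 ≤ n) (hβ : IsPosRoot β) (hβ' : IsPosRoot β')
    (hc : β + β' = cvec n) : len (sref β) + len (sref β') = 2 * (n - 1) := by
  obtain ⟨p, q, hpq, hf⟩ := hβ.1.exists_finPart_eq hn
  have hf' := finPart_eq_of_add_eq_cvec hc hf
  rcases hpq.lt_or_gt with h | h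
  · exact len_sref_add_len_sref_of_lt hβ.2 hβ' hc h hf
  · rw [add_comm] at hc ⊢
    exact len_sref_add_len_sref_of_lt hβ'.2 hβ hc h hf'

end Complementary

end AffA.Aff

open AffA Aff in
theorem pow_reduced_general (n : ℕ) (hn : 3 ≤ n) (β β' : Fin n → ℤ)
    (hβ : IsPosRoot β) (hβ' : IsPosRoot β') (hc : β + β' = cvec n)
    (m : ℕ) :
    len ((sref β * sref β') ^ m) = m * (len (sref β) + len (sref β')) ∧
    len ((sref β * sref β') ^ m) = 2 * m * (n - 1) := by
  obtain ⟨p, q, hpq, hf⟩ := hβ.1.exists_finPart_eq hn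
  have hpow : len ((sref β * sref β') ^ m) = m * (2 * (n - 1)) := by
    rw [sref_mul_sref_of_finPart_eq hc hpq hf, trE_pow, len_trE_nsmul,
      len_trE_single_sub_single hpq]
  rw [hpow, len_sref_add_len_sref hn hβ hβ' hc]
  exact ⟨rfl, by ring⟩

open AffA Aff in
/-- for `β + β' = c`, the product `(s_β s_{β'})^m` is reduced
(its length is the sum of the lengths of its `2m` reflection factors); in
particular `ℓ((s_β s_{β'})^m) = 2m(n−1)`. -/
theorem pow_reduced (n : ℕ) (hn : 3 ≤ n) (β β' : Fin n → ℤ)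
    (hβ : IsPosRoot β) (hβ' : IsPosRoot β') (hc : β + β' = cvec n)
    (m : ℕ) (hm : 1 ≤ m) :
    len ((sref β * sref β') ^ m) = m * (len (sref β) + len (sref β')) ∧
    len ((sref β * sref β') ^ m) = 2 * m * (n - 1) :=
  pow_reduced_general n hn β β' hβ hβ' hc m
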